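/- arXiv:math/0703148 — 3 statements merged into one kernel-verified Lean document; each statement's English description precedes it below -/
import Mathlib

section
/- Let (R,m) be a Noetherian local ring, I an ideal of R, and M an R-module such that Supp_R(M) ⊆ V(I), where V(I) = {p ∈ Spec(R) : p ⊇ I}. Then the natural map from D(M) to its I-adic completion, D(M) → inverse limit over l ∈ ℕ of D(M)/I^l·D(M), is an isomorphism. -/
/-!
Every element of `M` is killed by a power of `I`, because `I` lies in the radical of its
annihilator. A map `h : M → E` lies in `J • D(M)` exactly when it vanishes on the `J`-torsion of
`M`: one direction is clear, and for the other, if `J = (a₁, …, aₖ)` then `h` vanishes on the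
kernel of `x ↦ (aᵢ x)ᵢ : M → Mᵏ`, so by injectivity of `E` it factors through `Mᵏ`, which writes
`h` as `∑ aᵢ hᵢ`. Hence `D(M)/I^n D(M)` is the dual of the `I^n`-torsion of `M`, and as `M` is
the union of these, a compatible family of classes glues to a unique element of `D(M)`.
-/

universe w

theorem Module.Injective.exists_comp_eq_of_ker_le {R : Type*} [Ring R] {M N : Type*}
    {E : Type w} [AddCommGroup M] [Module R M] [AddCommGroup N] [Module R N] [AddCommGroup E]
    [Module R E] [Small.{w} R] [Module.Injective R E] (f : M →ₗ[R] N) (g : M →ₗ[R] E)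
    (hfg : LinearMap.ker f ≤ LinearMap.ker g) :
    ∃ ψ : N →ₗ[R] E, ψ ∘ₗ f = g := by
  obtain ⟨ψ, hψ⟩ := Module.Injective.extension_property R E _ _
    ((LinearMap.ker f).liftQ f le_rfl)
    (LinearMap.ker_eq_bot.mp (Submodule.ker_liftQ_eq_bot _ _ _ le_rfl))
    ((LinearMap.ker f).liftQ g hfg)
  refine ⟨ψ, ?_⟩
  rw [← Submodule.liftQ_mkQ _ f le_rfl, ← LinearMap.comp_assoc, hψ, Submodule.liftQ_mkQ]

variable {R : Type*} [CommRing R] {M : Type*} [AddCommGroup M] [Module R M]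

namespace Ideal

theorem inf_torsionOf_le_torsionOf_add (x y : M) :
    torsionOf R M x ⊓ torsionOf R M y ≤ torsionOf R M (x + y) := fun a ha ↦ by
  rw [mem_torsionOf_iff, smul_add, (mem_torsionOf_iff x a).mp ha.1,
    (mem_torsionOf_iff y a).mp ha.2, add_zero]

theorem torsionOf_le_torsionOf_smul (r : R) (x : M) :
    torsionOf R M x ≤ torsionOf R M (r • x) := fun a ha ↦ by
  rw [mem_torsionOf_iff, smul_comm, (mem_torsionOf_iff x a).mp ha, smul_zero]

end Ideal

theorem Module.exists_pow_le_torsionOf_of_support_subset_zeroLocus {I : Ideal R} (hI : I.FG)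
    (hsupp : Module.support R M ⊆ PrimeSpectrum.zeroLocus (I : Set R)) (x : M) :
    ∃ n : ℕ, I ^ n ≤ Ideal.torsionOf R M x := by
  refine Ideal.exists_pow_le_of_le_radical_of_fg ?_ hI
  rw [← PrimeSpectrum.zeroLocus_subset_zeroLocus_iff]
  intro p hp
  refine hsupp (Module.mem_support_iff_exists_annihilator.mpr ⟨x, ?_⟩)
  rwa [Ideal.annihilator_span_singleton_eq_torsionOf]

namespace LinearMap

theorem apply_eq_zero_of_mem_smul_top {N : Type*} [AddCommGroup N] [Module R N] {J : Ideal R}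
    {h : M →ₗ[R] N} (hh : h ∈ J • (⊤ : Submodule R (M →ₗ[R] N))) {x : M}
    (hx : J ≤ Ideal.torsionOf R M x) :
    h x = 0 := by
  refine Submodule.smul_induction_on hh (fun a ha g _ ↦ ?_) fun f g hf hg ↦ ?_
  · rw [smul_apply, ← map_smul, (Ideal.mem_torsionOf_iff x a).mp (hx ha), map_zero]
  · rw [add_apply, hf, hg, add_zero]

theorem mem_smul_top_of_forall_apply_eq_zero {E : Type w} [AddCommGroup E] [Module R E]
    [Small.{w} R] [Module.Injective R E] {J : Ideal R} (hJ : J.FG) {h : M →ₗ[R] E}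
    (hh : ∀ x : M, J ≤ Ideal.torsionOf R M x → h x = 0) :
    h ∈ J • (⊤ : Submodule R (M →ₗ[R] E)) := by
  classical
  obtain ⟨s, rfl⟩ := hJ
  let φ : M →ₗ[R] (s → M) := ∑ i : s, (i : R) • single R (fun _ ↦ M) i
  have hφ : ker φ ≤ ker h := fun x hx ↦ hh x <| Ideal.span_le.mpr fun a ha ↦ by
    simpa [φ, Pi.single_apply] using congrFun (mem_ker.mp hx) ⟨a, ha⟩
  obtain ⟨ψ, rfl⟩ := Module.Injective.exists_comp_eq_of_ker_le φ h hφ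
  have hsum : ψ ∘ₗ φ = ∑ i : s, (i : R) • (ψ ∘ₗ single R (fun _ ↦ M) i) := by
    ext x
    simp [φ]
  rw [hsum]
  exact Submodule.sum_mem _ fun i _ ↦
    Submodule.smul_mem_smul (Ideal.subset_span i.2) Submodule.mem_top

variable {N : Type*} [AddCommGroup N] [Module R N] {I : Ideal R}

theorem exists_forall_apply_eq_of_pow_le_torsionOf
    (htors : ∀ x : M, ∃ n, I ^ n ≤ Ideal.torsionOf R M x) (g : ℕ → M →ₗ[R] N)
    (hg : ∀ m n x, m ≤ n → I ^ m ≤ Ideal.torsionOf R M x → g m x = g n x) :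
    ∃ f : M →ₗ[R] N, ∀ n x, I ^ n ≤ Ideal.torsionOf R M x → f x = g n x := by
  choose l hl using htors
  have hgl : ∀ n x, I ^ n ≤ Ideal.torsionOf R M x → g (l x) x = g n x := fun n x hn ↦ by
    rcases le_total (l x) n with h | h
    · exact hg _ _ x h (hl x)
    · exact (hg _ _ x h hn).symm
  have hle : ∀ x {n}, l x ≤ n → I ^ n ≤ Ideal.torsionOf R M x :=
    fun x _ h ↦ (Ideal.pow_le_pow_right h).trans (hl x)
  refine ⟨{ toFun x := g (l x) x, map_add' := fun x y ↦ ?_, map_smul' := fun r x ↦ ?_ }, hgl⟩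
  · have hx := hle x (le_max_left (l x) (l y))
    have hy := hle y (le_max_right (l x) (l y))
    change g (l (x + y)) (x + y) = g (l x) x + g (l y) y
    rw [hgl _ _ ((le_inf hx hy).trans (Ideal.inf_torsionOf_le_torsionOf_add x y)), map_add,
      hgl _ x hx, hgl _ y hy]
  · change g (l (r • x)) (r • x) = r • g (l x) x
    rw [hgl _ _ ((hl x).trans (Ideal.torsionOf_le_torsionOf_smul r x)), map_smul]

theorem isHausdorff_of_pow_le_torsionOf
    (htors : ∀ x : M, ∃ n, I ^ n ≤ Ideal.torsionOf R M x) :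
    IsHausdorff I (M →ₗ[R] N) := by
  refine ⟨fun f hf ↦ ext fun x ↦ ?_⟩
  obtain ⟨n, hn⟩ := htors x
  exact apply_eq_zero_of_mem_smul_top (sub_zero f ▸ SModEq.sub_mem.mp (hf n)) hn

theorem isPrecomplete_of_pow_le_torsionOf {E : Type w} [AddCommGroup E] [Module R E]
    [Small.{w} R] [Module.Injective R E] (hI : I.FG)
    (htors : ∀ x : M, ∃ n, I ^ n ≤ Ideal.torsionOf R M x) :
    IsPrecomplete I (M →ₗ[R] E) := by
  refine ⟨fun g hg ↦ ?_⟩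
  have hgx : ∀ m n x, m ≤ n → I ^ m ≤ Ideal.torsionOf R M x → g m x = g n x :=
    fun m n x hmn hx ↦ sub_eq_zero.mp <|
      apply_eq_zero_of_mem_smul_top (SModEq.sub_mem.mp (hg hmn)) hx
  obtain ⟨f, hf⟩ := exists_forall_apply_eq_of_pow_le_torsionOf htors g hgx
  refine ⟨f, fun n ↦ SModEq.sub_mem.mpr <|
    mem_smul_top_of_forall_apply_eq_zero hI.pow fun x hx ↦ ?_⟩
  rw [sub_apply, hf n x hx, sub_self]

theorem isAdicComplete_of_support_subset_zeroLocus [IsNoetherianRing R] {E : Type w}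
    [AddCommGroup E] [Module R E] [Small.{w} R] [Module.Injective R E]
    (hsupp : Module.support R M ⊆ PrimeSpectrum.zeroLocus (I : Set R)) :
    IsAdicComplete I (M →ₗ[R] E) :=
  have htors := Module.exists_pow_le_torsionOf_of_support_subset_zeroLocus
    (IsNoetherian.noetherian I) hsupp
  { toIsHausdorff := isHausdorff_of_pow_le_torsionOf htors
    toIsPrecomplete := isPrecomplete_of_pow_le_torsionOf (IsNoetherian.noetherian I) htors }

end LinearMap

theorem stmt6_general {R : Type} [CommRing R] [IsNoetherianRing R]
    (E : Type) [AddCommGroup E] [Module R E] [Module.Injective R E]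
    (I : Ideal R) (M : Type) [AddCommGroup M] [Module R M]
    (hsupp : Module.support R M ⊆ PrimeSpectrum.zeroLocus (I : Set R)) :
    Function.Bijective (AdicCompletion.of I (M →ₗ[R] E)) :=
  AdicCompletion.of_bijective_iff.mpr (LinearMap.isAdicComplete_of_support_subset_zeroLocus hsupp)

/-- Let `(R, m)` be a noetherian local ring, `E` an injective hull of the
residue field `R/m` and `D = Hom_R(-, E)` the Matlis dual functor.  Let `I` be an ideal
of `R` and `M` an `R`-module with `Supp_R(M) ⊆ V(I)`.  Then the natural map from `D(M)`
to its `I`-adic completion (the inverse limit over `l ∈ ℕ` of `D(M)/I^l·D(M)`) is an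
isomorphism. -/
theorem stmt6 {R : Type} [CommRing R] [IsNoetherianRing R] [IsLocalRing R]
    (E : Type) [AddCommGroup E] [Module R E] [Module.Injective R E]
    (e : IsLocalRing.ResidueField R →ₗ[R] E) (he : Function.Injective e)
    (hess : ∀ N : Submodule R E, N ≠ ⊥ → N ⊓ LinearMap.range e ≠ ⊥)
    (I : Ideal R) (M : Type) [AddCommGroup M] [Module R M]
    (hsupp : Module.support R M ⊆ PrimeSpectrum.zeroLocus (I : Set R)) :
    Function.Bijective (AdicCompletion.of I (M →ₗ[R] E)) :=
  stmt6_general E I M hsupp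
end

section
/- Let (R,m) be a Noetherian local ring, I an ideal of R, and M an R-module such that Supp_R(M) ⊆ V(I). Then the intersection over all l ∈ ℕ of the submodules I^l·D(M) of D(M) is zero. -/
/-! Every `x ∈ M` is killed by some power `I ^ n`, since `Supp M ⊆ V(I)` puts `I` inside the
radical of `Ann(x)` and `I` is finitely generated. For `f = ∑ aᵢ • gᵢ ∈ I ^ n • D(M)` this gives
`f x = ∑ gᵢ (aᵢ • x) = 0`. -/

open PrimeSpectrum

theorem Module.le_radical_annihilator_span_singleton_of_support_subset {R M : Type*}
    [CommRing R] [AddCommGroup M] [Module R M] {I : Ideal R}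
    (hsupp : Module.support R M ⊆ zeroLocus I) (x : M) :
    I ≤ (R ∙ x).annihilator.radical :=
  (zeroLocus_subset_zeroLocus_iff _ _).mp fun _ hp =>
    hsupp (Module.mem_support_iff_exists_annihilator.mpr ⟨x, hp⟩)

theorem LinearMap.apply_eq_zero_of_mem_smul_top_s7 {R M N : Type*} [CommRing R]
    [AddCommGroup M] [Module R M] [AddCommGroup N] [Module R N] {J : Ideal R}
    {f : M →ₗ[R] N} (hf : f ∈ J • (⊤ : Submodule R (M →ₗ[R] N))) {x : M}
    (hx : J ≤ (R ∙ x).annihilator) : f x = 0 := by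
  refine Submodule.smul_induction_on hf (fun a ha g _ => ?_) fun g h hg hh => ?_
  · have hax : a • x = 0 := (Submodule.mem_annihilator_span_singleton x a).mp (hx ha)
    rw [LinearMap.smul_apply, ← g.map_smul, hax, map_zero]
  · rw [LinearMap.add_apply, hg, hh, add_zero]

theorem stmt7_general {R : Type} [CommRing R] [IsNoetherianRing R]
    (E : Type) [AddCommGroup E] [Module R E]
    (I : Ideal R) (M : Type) [AddCommGroup M] [Module R M]
    (hsupp : Module.support R M ⊆ PrimeSpectrum.zeroLocus (I : Set R)) :
    (⨅ l : ℕ, (I ^ l • ⊤ : Submodule R (M →ₗ[R] E))) = ⊥ := by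
  refine eq_bot_iff.mpr fun f hf => (Submodule.mem_bot R).mpr (LinearMap.ext fun x => ?_)
  obtain ⟨n, hn⟩ := Ideal.exists_pow_le_of_le_radical_of_fg
    (Module.le_radical_annihilator_span_singleton_of_support_subset hsupp x)
    (IsNoetherian.noetherian I)
  exact LinearMap.apply_eq_zero_of_mem_smul_top_s7 (Submodule.mem_iInf _ |>.mp hf n) hn

/-- Let `(R, m)` be a noetherian local ring, `E` an injective hull of the
residue field `R/m` and `D = Hom_R(-, E)` the Matlis dual functor.  Let `I` be an ideal
of `R` and `M` an `R`-module with `Supp_R(M) ⊆ V(I)`.  Then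
`⋂_{l ∈ ℕ} I^l · D(M) = 0`. -/
theorem stmt7 {R : Type} [CommRing R] [IsNoetherianRing R] [IsLocalRing R]
    (E : Type) [AddCommGroup E] [Module R E] [Module.Injective R E]
    (e : IsLocalRing.ResidueField R →ₗ[R] E) (he : Function.Injective e)
    (hess : ∀ N : Submodule R E, N ≠ ⊥ → N ⊓ LinearMap.range e ≠ ⊥)
    (I : Ideal R) (M : Type) [AddCommGroup M] [Module R M]
    (hsupp : Module.support R M ⊆ PrimeSpectrum.zeroLocus (I : Set R)) :
    (⨅ l : ℕ, (I ^ l • ⊤ : Submodule R (M →ₗ[R] E))) = ⊥ :=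
  stmt7_general E I M hsupp
end

section
/- Let (R,m) be a Noetherian local complete domain, I an ideal of R, h ∈ ℕ, and x = x_1,…,x_h ∈ I an R-regular sequence such that √((x_1,…,x_h)R) is strictly contained in √I. Then the ideal J_{x,I} := {r ∈ R : for every l ∈ ℕ there exists s ∈ ℕ with r·I^s ⊆ (x_1^l,…,x_h^l)R} is zero. -/
/-- The ideal `J_{x,I} = {r ∈ R | ∀ l ∃ s, r·Iˢ ⊆ (x₁ˡ,…,x_hˡ)R}`. -/
def Jideal {R : Type} [CommRing R] (I : Ideal R) {h : ℕ} (x : Fin h → R) : Ideal R where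
  carrier := {r : R | ∀ l : ℕ, ∃ s : ℕ, ∀ a ∈ I ^ s,
    r * a ∈ Ideal.span (Set.range fun i => x i ^ l)}
  zero_mem' := fun l => ⟨0, fun a _ => by simp [Ideal.zero_mem]⟩
  add_mem' := by
    intro r r' hr hr' l
    obtain ⟨s, hs⟩ := hr l
    obtain ⟨s', hs'⟩ := hr' l
    refine ⟨max s s', fun a ha => ?_⟩
    have h1 : a ∈ I ^ s := Ideal.pow_le_pow_right (le_max_left s s') ha
    have h2 : a ∈ I ^ s' := Ideal.pow_le_pow_right (le_max_right s s') ha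
    simpa [add_mul] using Ideal.add_mem _ (hs a h1) (hs' a h2)
  smul_mem' := by
    intro c r hr l
    obtain ⟨s, hs⟩ := hr l
    exact ⟨s, fun a ha => by
      simpa [smul_eq_mul, mul_assoc] using Ideal.mul_mem_left _ c (hs a ha)⟩

/-!
Pick `y ∈ I` outside `√(x)`. For `r ∈ J_{x,I}` and every `l`, some `r yˢ` lies in
`(xˡ) ⊆ (x)ˡ`, so the image of `r` in `R_y` lies in every power of the proper ideal `(x)R_y`.
By the Krull intersection theorem in the noetherian domain `R_y` that image is zero, and
`R → R_y` is injective.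
-/

namespace Ideal

variable {R : Type*} [CommRing R]

theorem exists_mem_notMem_radical_of_radical_lt {I K : Ideal R} (hlt : K.radical < I.radical) :
    ∃ y ∈ I, y ∉ K.radical := by
  obtain ⟨z, ⟨n, hzn⟩, hzK⟩ := SetLike.exists_of_lt hlt
  exact ⟨z ^ n, hzn, fun h => hzK (mem_radical_of_pow_mem h)⟩

theorem span_range_pow_le_pow_span_range {ι : Type*} (x : ι → R) (l : ℕ) :
    span (Set.range fun i => x i ^ l) ≤ span (Set.range x) ^ l := by
  rw [span_le]
  rintro _ ⟨i, rfl⟩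
  exact pow_mem_pow (subset_span (Set.mem_range_self i)) l

theorem eq_zero_of_forall_exists_pow_mul_mem_pow [IsDomain R] [IsNoetherianRing R]
    {K : Ideal R} {y r : R} (hy : y ∉ K.radical) (hr : ∀ l : ℕ, ∃ s : ℕ, y ^ s * r ∈ K ^ l) :
    r = 0 := by
  let S := Localization.Away y
  have hy0 : y ≠ 0 := fun h => hy (h ▸ K.radical.zero_mem)
  have hpowers := powers_le_nonZeroDivisors_of_noZeroDivisors hy0
  have : IsDomain S := IsLocalization.isDomain_of_le_nonZeroDivisors (S := S) hpowers
  have : IsNoetherianRing S := IsLocalization.isNoetherianRing (.powers y) S inferInstance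
  have hKS : K.map (algebraMap R S) ≠ ⊤ := by
    rw [IsLocalization.map_algebraMap_ne_top_iff_disjoint (.powers y)]
    refine Set.disjoint_left.mpr ?_
    rintro _ ⟨k, rfl⟩ hk
    exact hy ⟨k, hk⟩
  have hrS : algebraMap R S r ∈ ⨅ l : ℕ, K.map (algebraMap R S) ^ l := by
    refine mem_iInf.mpr fun l => ?_
    obtain ⟨s, hs⟩ := hr l
    rw [← Ideal.map_pow, IsLocalization.algebraMap_mem_map_algebraMap_iff (.powers y)]
    exact ⟨y ^ s, ⟨s, rfl⟩, hs⟩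
  rw [iInf_pow_eq_bot_of_isDomain _ hKS, mem_bot] at hrS
  exact IsLocalization.injective S hpowers (hrS.trans (map_zero _).symm)

end Ideal

theorem stmt14_general {R : Type} [CommRing R] [IsDomain R] [IsNoetherianRing R]
    (I : Ideal R) (h : ℕ) (x : Fin h → R)
    (hlt : (Ideal.span (Set.range x)).radical < I.radical) :
    Jideal I x = ⊥ := by
  obtain ⟨y, hyI, hyK⟩ := Ideal.exists_mem_notMem_radical_of_radical_lt hlt
  refine eq_bot_iff.mpr fun r hr => Ideal.mem_bot.mpr ?_
  refine Ideal.eq_zero_of_forall_exists_pow_mul_mem_pow hyK fun l => ?_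
  obtain ⟨s, hs⟩ := hr l
  refine ⟨s, Ideal.span_range_pow_le_pow_span_range x l ?_⟩
  rw [mul_comm]
  exact hs _ (Ideal.pow_mem_pow hyI s)

/-- Let `(R, m)` be a noetherian local complete domain, `I` an ideal of
`R`, `h ∈ ℕ`, and `x = x₁,…,x_h ∈ I` an `R`-regular sequence such that
`√((x₁,…,x_h)R)` is strictly contained in `√I`.  Then the ideal
`J_{x,I} = {r ∈ R | ∀ l ∃ s, r·Iˢ ⊆ (x₁ˡ,…,x_hˡ)R}` is zero. -/
theorem stmt14 {R : Type} [CommRing R] [IsDomain R] [IsNoetherianRing R] [IsLocalRing R]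
    [IsAdicComplete (IsLocalRing.maximalIdeal R) R]
    (I : Ideal R) (h : ℕ) (x : Fin h → R) (hxI : ∀ i, x i ∈ I)
    (hreg : RingTheory.Sequence.IsRegular R (List.ofFn x))
    (hlt : (Ideal.span (Set.range x)).radical < I.radical) :
    Jideal I x = ⊥ :=
  stmt14_general I h x hlt
end
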